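/- Relative perturbation bound for the Drazin inverse: let A, E, B, X, Y be n×n quaternion matrices with B = A + E. Assume X is a k-Drazin inverse of A, Y is an m-Drazin inverse of B, E = (A * X) * E * (A * X), ‖X * E‖₂ < 1, 1 + X * E is a unit of the matrix ring, and ‖(1 + X * E)⁻¹‖₂ ≤ 1 / (1 - ‖X * E‖₂). Then ‖Y - X‖₂ ≤ ‖X‖₂ * ‖X * E‖₂ / (1 - ‖X * E‖₂). -/

import Mathlib

noncomputable section

notation "ℍ" => Quaternion ℝ

/-- The bounded ℝ-linear map `x ↦ M.mulVec x` between `PiLp 2` spaces of quaternion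
vectors. -/
def mulVecCLM {m n : ℕ} (M : Matrix (Fin m) (Fin n) ℍ) :
    PiLp 2 (fun _ : Fin n => ℍ) →L[ℝ] PiLp 2 (fun _ : Fin m => ℍ) :=
  LinearMap.toContinuousLinearMap
    { toFun := fun x => WithLp.toLp 2 (M.mulVec x)
      map_add' := fun x y => by
        first
        | simp only [WithLp.ofLp_add, Matrix.mulVec_add, WithLp.toLp_add]
        | simp [Matrix.mulVec_add]
      map_smul' := fun r x => by
        first
        | simp only [WithLp.ofLp_smul, Matrix.mulVec_smul, WithLp.toLp_smul, RingHom.id_apply]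
        | simp [Matrix.mulVec_smul] }

/-- The spectral norm of a quaternion matrix: the operator norm of `x ↦ M.mulVec x`. -/
def specNorm {m n : ℕ} (M : Matrix (Fin m) (Fin n) ℍ) : ℝ := ‖mulVecCLM M‖

/-- `X` is a `k`-Drazin inverse of the square quaternion matrix `A`. -/
def IsDrazinInverse {n : ℕ} (A X : Matrix (Fin n) (Fin n) ℍ) (k : ℕ) : Prop :=
  A ^ k * X * A = A ^ k ∧ X * A * X = X ∧ A * X = X * A

/-!
With `p = a * x`, the condition `e = p * e * p` gives `a + e = a * (1 + x * e)`, and `p` commutes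
with `u = 1 + x * e`. Hence `u⁻¹ * x` satisfies the Drazin equations for `a + e` with the same
index, so by uniqueness it is the Drazin inverse `y` of `a + e`. Then
`y - x = -(u⁻¹ * (x * e) * x)`, and submultiplicativity of the spectral norm together with the
bound on `‖u⁻¹‖` finishes the proof.
-/

structure IsDrazinInv {M : Type*} [Monoid M] (a x : M) (k : ℕ) : Prop where
  pow_mul_mul : a ^ k * x * a = a ^ k
  mul_mul_self : x * a * x = x
  commute : Commute a x

theorem pow_mul_eq_pow_mul_of_mul_eq {M : Type*} [Monoid M] {a b q : M} (hq : Commute a q)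
    (h : b * q = a * q) (j : ℕ) : b ^ j * q = a ^ j * q := by
  induction j with
  | zero => simp
  | succ j ih =>
    calc b ^ (j + 1) * q = b ^ j * q * a := by rw [pow_succ, mul_assoc, h, hq.eq, mul_assoc]
      _ = a ^ (j + 1) * q := by rw [ih, mul_assoc, ← hq.eq, ← mul_assoc, pow_succ]

theorem Ring.inverse_one_add_mul_sub {R : Type*} [Ring R] {w : R} (hw : IsUnit (1 + w)) (x : R) :
    Ring.inverse (1 + w) * x - x = -(Ring.inverse (1 + w) * w * x) := by
  calc Ring.inverse (1 + w) * x - x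
        = Ring.inverse (1 + w) * x - Ring.inverse (1 + w) * (1 + w) * x := by
          rw [Ring.inverse_mul_cancel _ hw, one_mul]
    _ = -(Ring.inverse (1 + w) * w * x) := by noncomm_ring

namespace IsDrazinInv

section Monoid

variable {M : Type*} [Monoid M] {a x y : M} {k m : ℕ}

theorem pow_succ_mul_pow (h : IsDrazinInv a x k) (j : ℕ) : x ^ (j + 1) * a ^ j = x := by
  induction j with
  | zero => simp
  | succ j ih =>
    calc x ^ (j + 1 + 1) * a ^ (j + 1) = x * (x ^ (j + 1) * a ^ j) * a := by
          rw [pow_succ' x, pow_succ a]; simp only [mul_assoc]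
      _ = x := by rw [ih, mul_assoc, ← h.commute.eq, ← mul_assoc, h.mul_mul_self]

theorem mul_mul_pow (h : IsDrazinInv a x k) : x * a * a ^ k = a ^ k := by
  rw [((h.commute.symm.mul_left (Commute.refl a)).pow_right k).eq, ← mul_assoc, h.pow_mul_mul]

theorem mul_mul_eq_right (hx : IsDrazinInv a x k) (hy : IsDrazinInv a y m) : x * a * y = y := by
  have hy' : a ^ k * y ^ (k + 1) = y := by
    rw [(hy.commute.pow_pow k (k + 1)).eq, hy.pow_succ_mul_pow]
  calc x * a * y = x * a * a ^ k * y ^ (k + 1) := by rw [mul_assoc _ (a ^ k), hy']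
    _ = y := by rw [hx.mul_mul_pow, hy']

theorem mul_mul_eq_left (hx : IsDrazinInv a x k) (hy : IsDrazinInv a y m) : x * a * y = x :=
  calc x * a * y = x ^ (m + 1) * a ^ m * y * a := by
        rw [hx.pow_succ_mul_pow, mul_assoc, mul_assoc, hy.commute.eq]
    _ = x := by
        rw [mul_assoc (x ^ (m + 1)), mul_assoc (x ^ (m + 1)), hy.pow_mul_mul,
          hx.pow_succ_mul_pow]

theorem unique (hx : IsDrazinInv a x k) (hy : IsDrazinInv a y m) : x = y :=
  (hx.mul_mul_eq_left hy).symm.trans (hx.mul_mul_eq_right hy)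

end Monoid

section Ring

variable {R : Type*} [Ring R] {a e x : R} {k : ℕ}

theorem isIdempotentElem (h : IsDrazinInv a x k) : IsIdempotentElem (a * x) := by
  rw [IsIdempotentElem, mul_assoc, ← mul_assoc x, h.mul_mul_self]

theorem pow_mul_one_sub (h : IsDrazinInv a x k) : a ^ k * (1 - a * x) = 0 := by
  rw [mul_sub, mul_one, h.commute.eq, ← mul_assoc, h.pow_mul_mul, sub_self]

theorem add_of_eq_mul_mul (hx : IsDrazinInv a x k) (he : e = a * x * e * (a * x))
    (hu : IsUnit (1 + x * e)) : IsDrazinInv (a + e) (Ring.inverse (1 + x * e) * x) k := by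
  have hp := hx.isIdempotentElem
  have hpe : a * x * e = e := by
    calc a * x * e = a * x * (a * x) * e * (a * x) := by
          nth_rw 1 [he]; simp only [mul_assoc]
      _ = e := by rw [hp.eq, ← he]
  have hep : e * (a * x) = e := by
    calc e * (a * x) = a * x * e * (a * x * (a * x)) := by
          nth_rw 1 [he]; simp only [mul_assoc]
      _ = e := by rw [hp.eq, ← he]
  have hpx : a * x * x = x := by rw [hx.commute.eq, hx.mul_mul_self]
  have hb : a + e = a * (1 + x * e) := by rw [mul_add, mul_one, ← mul_assoc, hpe]
  have hpu : a * x * (1 + x * e) = (1 + x * e) * (a * x) := by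
    rw [mul_add, add_mul, mul_one, one_mul, ← mul_assoc, hpx, mul_assoc x, hep]
  have hbz : (a + e) * (Ring.inverse (1 + x * e) * x) = a * x := by
    rw [hb, mul_assoc, Ring.mul_inverse_cancel_left _ _ hu]
  have hzb : Ring.inverse (1 + x * e) * x * (a + e) = a * x := by
    rw [hb, mul_assoc, ← mul_assoc x, ← hx.commute.eq, hpu, Ring.inverse_mul_cancel_left _ _ hu]
  have hbp : (a + e) ^ k * (a * x) = (a + e) ^ k := by
    have hq : (a + e) * (1 - a * x) = a * (1 - a * x) := by
      rw [add_mul, mul_sub e, hep, mul_one, sub_self, add_zero]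
    have hcomm : Commute a (1 - a * x) :=
      (Commute.one_right a).sub_right ((Commute.refl a).mul_right hx.commute)
    have h0 := pow_mul_eq_pow_mul_of_mul_eq hcomm hq k
    rw [hx.pow_mul_one_sub, mul_sub, mul_one, sub_eq_zero] at h0
    exact h0.symm
  refine ⟨by rw [mul_assoc, hzb, hbp], ?_, hbz.trans hzb.symm⟩
  rw [mul_assoc, hbz, mul_assoc, ← mul_assoc x, hx.mul_mul_self]

end Ring

end IsDrazinInv

theorem mulVecCLM_mul {l m n : ℕ} (M : Matrix (Fin l) (Fin m) ℍ)
    (N : Matrix (Fin m) (Fin n) ℍ) :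
    mulVecCLM (M * N) = (mulVecCLM M).comp (mulVecCLM N) :=
  ContinuousLinearMap.ext fun x => congrArg (WithLp.toLp 2) (Matrix.mulVec_mulVec x.ofLp M N).symm

theorem mulVecCLM_neg {m n : ℕ} (M : Matrix (Fin m) (Fin n) ℍ) :
    mulVecCLM (-M) = -mulVecCLM M :=
  ContinuousLinearMap.ext fun x => congrArg (WithLp.toLp 2) (Matrix.neg_mulVec x.ofLp M)

theorem specNorm_nonneg {m n : ℕ} (M : Matrix (Fin m) (Fin n) ℍ) : 0 ≤ specNorm M :=
  norm_nonneg (mulVecCLM M)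

theorem specNorm_mul_le {l m n : ℕ} (M : Matrix (Fin l) (Fin m) ℍ)
    (N : Matrix (Fin m) (Fin n) ℍ) :
    specNorm (M * N) ≤ specNorm M * specNorm N := by
  rw [specNorm, mulVecCLM_mul]
  exact ContinuousLinearMap.opNorm_comp_le _ _

theorem specNorm_neg {m n : ℕ} (M : Matrix (Fin m) (Fin n) ℍ) : specNorm (-M) = specNorm M := by
  rw [specNorm, mulVecCLM_neg]
  exact norm_neg (mulVecCLM M)

theorem drazin_perturbation_relative_bound_general {n : ℕ}
    (A E B X Y : Matrix (Fin n) (Fin n) ℍ) (k m : ℕ)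
    (hB : B = A + E)
    (hX : IsDrazinInverse A X k) (hY : IsDrazinInverse B Y m)
    (hE : E = (A * X) * E * (A * X))
    (hU : IsUnit (1 + X * E))
    (hinv : specNorm (Ring.inverse (1 + X * E)) ≤ 1 / (1 - specNorm (X * E))) :
    specNorm (Y - X) ≤ specNorm X * specNorm (X * E) / (1 - specNorm (X * E)) := by
  have hX' : IsDrazinInv A X k := ⟨hX.1, hX.2.1, hX.2.2⟩
  have hY' : IsDrazinInv B Y m := ⟨hY.1, hY.2.1, hY.2.2⟩
  have hYZ : Y = Ring.inverse (1 + X * E) * X :=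
    hY'.unique (hB ▸ hX'.add_of_eq_mul_mul hE hU)
  rw [hYZ, Ring.inverse_one_add_mul_sub hU, specNorm_neg]
  calc specNorm (Ring.inverse (1 + X * E) * (X * E) * X)
      ≤ specNorm (Ring.inverse (1 + X * E)) * specNorm (X * E) * specNorm X :=
        (specNorm_mul_le _ _).trans
          (mul_le_mul_of_nonneg_right (specNorm_mul_le _ _) (specNorm_nonneg X))
    _ ≤ 1 / (1 - specNorm (X * E)) * specNorm (X * E) * specNorm X :=
        mul_le_mul_of_nonneg_right (mul_le_mul_of_nonneg_right hinv (specNorm_nonneg _))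
          (specNorm_nonneg X)
    _ = specNorm X * specNorm (X * E) / (1 - specNorm (X * E)) := by ring

/-- Relative perturbation bound for the Drazin inverse. -/
theorem drazin_perturbation_relative_bound {n : ℕ}
    (A E B X Y : Matrix (Fin n) (Fin n) ℍ) (k m : ℕ)
    (hB : B = A + E)
    (hX : IsDrazinInverse A X k) (hY : IsDrazinInverse B Y m)
    (hE : E = (A * X) * E * (A * X))
    (hnorm : specNorm (X * E) < 1)
    (hU : IsUnit (1 + X * E))
    (hinv : specNorm (Ring.inverse (1 + X * E)) ≤ 1 / (1 - specNorm (X * E))) :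
    specNorm (Y - X) ≤ specNorm X * specNorm (X * E) / (1 - specNorm (X * E)) :=
  drazin_perturbation_relative_bound_general A E B X Y k m hB hX hY hE hU hinv
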